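/- arXiv:0803.2506 — 6 statements merged into one kernel-verified Lean document; each statement's English description precedes it below -/
import Mathlib

section
/- Let p be a prime with p ≡ 1 (mod 6) and s = (p-1)/3. With transition numbers n_{ik} = n_{ik}(1) defined from the cubic residue cosets, we have n_{ij} = n_{ji} for all i,j ∈ {0,1,2}. -/
/-- `Gcoset p g k` is the coset `G_k = {g^j : j ≡ k (mod 3)}` of the subgroup `G₀` of
cubic residues in `(ℤ/pℤ)*`, where `g` is a fixed generator of `(ℤ/pℤ)*`. -/
def Gcoset (p : ℕ) (g : ZMod p) (k : ZMod 3) : Set (ZMod p) :=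
  {x | ∃ j : ℕ, (j : ZMod 3) = k ∧ x = g ^ j}

/-- `transNum p g d i k` is the transition number `n_{ik}(d)`: the number of
`b ∈ {1,…,p-1}`, `b ≠ p-d`, with `b ∈ G_i` and `b+d ∈ G_k`. -/
noncomputable def transNum (p : ℕ) (g : ZMod p) (d : ℕ) (i k : ZMod 3) : ℕ :=
  Nat.card {b : ℕ // 1 ≤ b ∧ b ≤ p - 1 ∧ b ≠ p - d ∧
    (b : ZMod p) ∈ Gcoset p g i ∧ (b : ZMod p) + (d : ZMod p) ∈ Gcoset p g k}

/-!
Reflection `b ↦ p - 1 - b` is an involution of `{1, …, p - 2}` sending `b` to `-(b + 1)` and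
`b + 1` to `-b` modulo `p`. Since `-1 = (-1)³` is a cube, negation preserves every coset `G_i`,
so the reflection turns a transition `G_i → G_k` into a transition `G_k → G_i`.
-/

section Gcoset

variable {p : ℕ} {g : ZMod p}

lemma mul_mem_Gcoset {x y : ZMod p} {i k : ZMod 3}
    (hx : x ∈ Gcoset p g i) (hy : y ∈ Gcoset p g k) : x * y ∈ Gcoset p g (i + k) := by
  obtain ⟨a, rfl, rfl⟩ := hx
  obtain ⟨b, rfl, rfl⟩ := hy
  exact ⟨a + b, by push_cast; rfl, (pow_add g a b).symm⟩

lemma neg_one_mem_Gcoset_zero (hg : ∀ x : ZMod p, x ≠ 0 → ∃ j : ℕ, x = g ^ j) :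
    (-1 : ZMod p) ∈ Gcoset p g 0 := by
  obtain ⟨j, hj⟩ : ∃ j : ℕ, (-1 : ZMod p) = g ^ j := by
    by_cases h : (-1 : ZMod p) = 0
    · exact ⟨0, by rw [pow_zero, h, neg_eq_zero.mp h]⟩
    · exact hg _ h
  refine ⟨3 * j, by push_cast; rw [show (3 : ZMod 3) = 0 from rfl, zero_mul], ?_⟩
  rw [pow_mul', ← hj]
  norm_num

lemma neg_mem_Gcoset (hg : ∀ x : ZMod p, x ≠ 0 → ∃ j : ℕ, x = g ^ j) {x : ZMod p}
    {i : ZMod 3} (hx : x ∈ Gcoset p g i) : -x ∈ Gcoset p g i := by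
  simpa using mul_mem_Gcoset (neg_one_mem_Gcoset_zero hg) hx

lemma reflect_mem_transNum_one (hg : ∀ x : ZMod p, x ≠ 0 → ∃ j : ℕ, x = g ^ j)
    {i k : ZMod 3} {b : ℕ}
    (h : 1 ≤ b ∧ b ≤ p - 1 ∧ b ≠ p - 1 ∧ (b : ZMod p) ∈ Gcoset p g i ∧
      (b : ZMod p) + ((1 : ℕ) : ZMod p) ∈ Gcoset p g k) :
    1 ≤ p - 1 - b ∧ p - 1 - b ≤ p - 1 ∧ p - 1 - b ≠ p - 1 ∧
      ((p - 1 - b : ℕ) : ZMod p) ∈ Gcoset p g k ∧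
      ((p - 1 - b : ℕ) : ZMod p) + ((1 : ℕ) : ZMod p) ∈ Gcoset p g i := by
  obtain ⟨hb1, hbp, hbp', hi, hk⟩ := h
  have hcast : ((p - 1 - b : ℕ) : ZMod p) = -((b : ZMod p) + 1) := by
    rw [show p - 1 - b = p - (b + 1) by omega, Nat.cast_sub (by omega), ZMod.natCast_self]
    push_cast
    ring
  rw [Nat.cast_one] at hk ⊢
  refine ⟨by omega, by omega, by omega, hcast ▸ neg_mem_Gcoset hg hk, ?_⟩
  rw [hcast, neg_add, neg_add_cancel_right]
  exact neg_mem_Gcoset hg hi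

end Gcoset

theorem stmt_1_general (p : ℕ)
    (g : ZMod p) (hg : ∀ x : ZMod p, x ≠ 0 → ∃ j : ℕ, x = g ^ j)
    (i j : ZMod 3) :
    transNum p g 1 i j = transNum p g 1 j i := by
  refine Nat.card_congr
    { toFun := fun b => ⟨p - 1 - b, reflect_mem_transNum_one hg b.2⟩
      invFun := fun b => ⟨p - 1 - b, reflect_mem_transNum_one hg b.2⟩
      left_inv := ?_
      right_inv := ?_ } <;>
  · rintro ⟨b, hb⟩
    exact Subtype.ext (by dsimp only; omega)

theorem stmt_1 (p : ℕ) (hp : p.Prime) (hp6 : p % 6 = 1)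
    (g : ZMod p) (hg : ∀ x : ZMod p, x ≠ 0 → ∃ j : ℕ, x = g ^ j)
    (i j : ZMod 3) :
    transNum p g 1 i j = transNum p g 1 j i :=
  stmt_1_general p g hg i j
end

section
/- Let p be a prime with p ≡ 1 (mod 6), s = (p-1)/3, and n_{ik} the transition numbers of the cubic residue cosets. Then n₀₀ = s - 1 - n₀₁ - n₀₂, n₁₁ = n₂₀ = n₀₂, n₂₂ = n₁₀ = n₀₁, and n₁₂ = n₂₁ = s - n₀₁ - n₀₂. -/
namespace Stmt4
open Finset
open scoped Classical

variable {p : ℕ} {g : ZMod p}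

lemma p_ge (hp : p.Prime) (hp6 : p % 6 = 1) : 7 ≤ p := by
  have := hp.two_le; omega

lemma g_ne_zero (hp : p.Prime) (hp6 : p % 6 = 1)
    (hg : ∀ x : ZMod p, x ≠ 0 → ∃ j : ℕ, x = g ^ j) : g ≠ 0 := by
  haveI : Fact p.Prime := ⟨hp⟩
  have h7 := p_ge hp hp6
  have h2 : ((2:ℕ) : ZMod p) ≠ 0 := by
    rw [Ne, ZMod.natCast_eq_zero_iff]
    intro h; have := Nat.le_of_dvd (by norm_num) h; omega
  obtain ⟨j, hj⟩ := hg _ h2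
  intro hg0
  rw [hg0] at hj
  rcases Nat.eq_zero_or_pos j with h | h
  · rw [h, pow_zero] at hj
    have : ((2:ℕ) : ZMod p) = ((1:ℕ) : ZMod p) := by simpa using hj
    rw [ZMod.natCast_eq_natCast_iff] at this
    have := (Nat.modEq_iff_dvd' (by norm_num)).mp this.symm
    have := Nat.le_of_dvd (by norm_num) this; omega
  · rw [zero_pow (by omega)] at hj
    exact h2 hj

lemma order_g (hp : p.Prime) (hp6 : p % 6 = 1)
    (hg : ∀ x : ZMod p, x ≠ 0 → ∃ j : ℕ, x = g ^ j) : orderOf g = p - 1 := by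
  haveI : Fact p.Prime := ⟨hp⟩
  have h7 := p_ge hp hp6
  have hg0 := g_ne_zero hp hp6 hg
  have h1 : g ^ (p-1) = 1 := ZMod.pow_card_sub_one_eq_one hg0
  have hdvd : orderOf g ∣ p - 1 := orderOf_dvd_of_pow_eq_one h1
  have hfin : IsOfFinOrder g := isOfFinOrder_iff_pow_eq_one.mpr ⟨p-1, by omega, h1⟩
  have hpos : 0 < orderOf g := hfin.orderOf_pos
  have hsub : (univ.filter (fun x : ZMod p => x ≠ 0)) ⊆
      (Finset.range (orderOf g)).image (fun j => g ^ j) := by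
    intro x hx
    simp only [mem_filter, mem_univ, true_and] at hx
    obtain ⟨j, hj⟩ := hg x hx
    simp only [Finset.mem_image, Finset.mem_range]
    exact ⟨j % orderOf g, Nat.mod_lt _ hpos, by rw [pow_mod_orderOf]; exact hj.symm⟩
  have hcard1 : (univ.filter (fun x : ZMod p => x ≠ 0)).card = p - 1 := by
    rw [Finset.filter_ne' univ 0, Finset.card_erase_of_mem (mem_univ _), Finset.card_univ,
      ZMod.card]
  have := Finset.card_le_card hsub
  have h2 := Finset.card_image_le (s := Finset.range (orderOf g)) (f := fun j => g ^ j)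
  rw [Finset.card_range] at h2
  have hle := Nat.le_of_dvd (by omega) hdvd
  omega

lemma pow_modEq (hp : p.Prime) (hp6 : p % 6 = 1)
    (hg : ∀ x : ZMod p, x ≠ 0 → ∃ j : ℕ, x = g ^ j)
    {a b : ℕ} (h : g ^ a = g ^ b) : a ≡ b [MOD p - 1] := by
  haveI : Fact p.Prime := ⟨hp⟩
  have hg0 := g_ne_zero hp hp6 hg
  have key : ∀ a b : ℕ, a ≤ b → g ^ a = g ^ b → a ≡ b [MOD p - 1] := by
    intro a b hab h
    have h1 : g ^ a * 1 = g ^ a * g ^ (b - a) := by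
      rw [mul_one, ← pow_add, h]; congr 1; omega
    have h2 : (1 : ZMod p) = g ^ (b - a) := mul_left_cancel₀ (pow_ne_zero a hg0) h1
    have h3 : p - 1 ∣ b - a := by
      rw [← order_g hp hp6 hg]; exact orderOf_dvd_of_pow_eq_one h2.symm
    exact ((Nat.modEq_iff_dvd' hab).mpr h3)
  rcases le_total a b with hab | hab
  · exact key a b hab h
  · exact (key b a hab h.symm).symm

lemma pow_cast3 (hp : p.Prime) (hp6 : p % 6 = 1)
    (hg : ∀ x : ZMod p, x ≠ 0 → ∃ j : ℕ, x = g ^ j)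
    {a b : ℕ} (h : g ^ a = g ^ b) : (a : ZMod 3) = (b : ZMod 3) := by
  have h1 := pow_modEq hp hp6 hg h
  have h3 : (3:ℕ) ∣ p - 1 := by have := hp.two_le; omega
  rw [ZMod.natCast_eq_natCast_iff]
  exact h1.of_dvd h3

lemma zero_not_mem (hp : p.Prime) (hp6 : p % 6 = 1)
    (hg : ∀ x : ZMod p, x ≠ 0 → ∃ j : ℕ, x = g ^ j) (k : ZMod 3) :
    (0 : ZMod p) ∉ Gcoset p g k := by
  haveI : Fact p.Prime := ⟨hp⟩
  rintro ⟨j, -, hj⟩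
  exact pow_ne_zero j (g_ne_zero hp hp6 hg) hj.symm

lemma coset_unique (hp : p.Prime) (hp6 : p % 6 = 1)
    (hg : ∀ x : ZMod p, x ≠ 0 → ∃ j : ℕ, x = g ^ j) {x : ZMod p} {i k : ZMod 3}
    (hxi : x ∈ Gcoset p g i) (hxk : x ∈ Gcoset p g k) : i = k := by
  obtain ⟨j1, hj1, he1⟩ := hxi
  obtain ⟨j2, hj2, he2⟩ := hxk
  rw [← hj1, ← hj2]
  exact pow_cast3 hp hp6 hg (he1.symm.trans he2)

lemma mul_mem {x y : ZMod p} {i k : ZMod 3}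
    (hx : x ∈ Gcoset p g i) (hy : y ∈ Gcoset p g k) : x * y ∈ Gcoset p g (i + k) := by
  obtain ⟨j1, hj1, he1⟩ := hx
  obtain ⟨j2, hj2, he2⟩ := hy
  exact ⟨j1 + j2, by push_cast [hj1, hj2]; ring, by rw [he1, he2, pow_add]⟩

lemma inv_mem (hp : p.Prime) (hp6 : p % 6 = 1)
    (hg : ∀ x : ZMod p, x ≠ 0 → ∃ j : ℕ, x = g ^ j) {x : ZMod p} {i : ZMod 3}
    (hx : x ∈ Gcoset p g i) : x⁻¹ ∈ Gcoset p g (-i) := by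
  haveI : Fact p.Prime := ⟨hp⟩
  have hg0 := g_ne_zero hp hp6 hg
  have h7 := p_ge hp hp6
  obtain ⟨j, hj3, hjx⟩ := hx
  have hm : j ≤ (p-1)*(j+1) := by
    have : 1*(j + 1) ≤ (p-1)*(j+1) := Nat.mul_le_mul_right _ (by omega)
    omega
  set m := (p-1)*(j+1) - j with hmdef
  have hprod : x * g ^ m = 1 := by
    rw [hjx, ← pow_add]
    have hjm : j + m = (p-1)*(j+1) := by omega
    rw [hjm, pow_mul, ZMod.pow_card_sub_one_eq_one hg0, one_pow]
  refine ⟨m, ?_, (inv_eq_of_mul_eq_one_right hprod)⟩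
  have h3 : (((p-1) : ℕ) : ZMod 3) = 0 := by
    rw [ZMod.natCast_eq_zero_iff]; omega
  rw [hmdef, Nat.cast_sub hm, Nat.cast_mul, h3, zero_mul, zero_sub, hj3]

lemma neg_one_mem (hp : p.Prime) (hp6 : p % 6 = 1)
    (hg : ∀ x : ZMod p, x ≠ 0 → ∃ j : ℕ, x = g ^ j) :
    (-1 : ZMod p) ∈ Gcoset p g 0 := by
  haveI : Fact p.Prime := ⟨hp⟩
  have hne : (-1 : ZMod p) ≠ 0 := by
    simp
  obtain ⟨j, hj⟩ := hg _ hne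
  have h2 : g ^ (2*j) = g ^ 0 := by
    rw [two_mul, pow_add, ← hj, pow_zero, neg_one_mul, neg_neg]
  have h3 := pow_cast3 hp hp6 hg h2
  push_cast at h3
  have h4 : ∀ a : ZMod 3, 2*a = 0 → a = 0 := by decide
  exact ⟨j, h4 _ h3, hj⟩

lemma card_coset (hp : p.Prime) (hp6 : p % 6 = 1)
    (hg : ∀ x : ZMod p, x ≠ 0 → ∃ j : ℕ, x = g ^ j) (i : ZMod 3) :
    haveI : Fact p.Prime := ⟨hp⟩
    (univ.filter (fun x : ZMod p => x ∈ Gcoset p g i)).card = (p - 1) / 3 := by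
  haveI : Fact p.Prime := ⟨hp⟩
  have h7 := p_ge hp hp6
  have h3s : 3 * ((p-1)/3) = p - 1 := by omega
  set s := (p-1)/3 with hsdef
  have hival : i.val < 3 := i.val_lt
  have hicast : ((i.val : ℕ) : ZMod 3) = i := by
    simp [ZMod.natCast_val, ZMod.cast_id]
  refine (Finset.card_bij (s := Finset.range s)
      (t := univ.filter (fun x : ZMod p => x ∈ Gcoset p g i))
      (fun t _ => g ^ (i.val + 3*t)) ?_ ?_ ?_).symm.trans (Finset.card_range s)
  · intro t ht
    simp only [Finset.mem_range] at ht
    simp only [mem_filter, mem_univ, true_and]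
    exact ⟨i.val + 3*t, by rw [Nat.cast_add, Nat.cast_mul, hicast, ZMod.natCast_self, zero_mul, add_zero], rfl⟩
  · intro a ha b hb hab
    simp only [Finset.mem_range] at ha hb
    have := pow_modEq hp hp6 hg hab
    have ha' : i.val + 3*a < p - 1 := by omega
    have hb' : i.val + 3*b < p - 1 := by omega
    have : i.val + 3*a = i.val + 3*b := by
      have h := this
      unfold Nat.ModEq at h
      rw [Nat.mod_eq_of_lt ha', Nat.mod_eq_of_lt hb'] at h
      exact h
    omega
  · intro x hx
    simp only [mem_filter, mem_univ, true_and] at hx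
    obtain ⟨j, hj3, hjx⟩ := hx
    have hord : orderOf g = p - 1 := order_g hp hp6 hg
    have hgj : g ^ (j % (p-1)) = g ^ j := by
      conv_lhs => rw [← hord]
      exact pow_mod_orderOf g j
    set j' := j % (p-1) with hj'def
    have hj'lt : j' < p - 1 := Nat.mod_lt _ (by omega)
    have hj'3 : (j' : ZMod 3) = i := by
      rw [← hj3, ZMod.natCast_eq_natCast_iff]
      have hdvd : (3:ℕ) ∣ p - 1 := by omega
      exact (Nat.mod_modEq j (p-1)).of_dvd hdvd
    have hval : j' % 3 = i.val := by
      have := congrArg ZMod.val hj'3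
      rwa [ZMod.val_natCast] at this
    refine ⟨j' / 3, Finset.mem_range.mpr (by omega), ?_⟩
    have : i.val + 3 * (j' / 3) = j' := by omega
    show g ^ (i.val + 3 * (j' / 3)) = x
    rw [this, hgj, ← hjx]

noncomputable def Fik (p : ℕ) [NeZero p] (g : ZMod p) (i k : ZMod 3) : Finset (ZMod p) :=
  univ.filter (fun x => x ∈ Gcoset p g i ∧ x + 1 ∈ Gcoset p g k)

lemma mem_Fik {p : ℕ} [NeZero p] {g : ZMod p} {i k : ZMod 3} {x : ZMod p} :
    x ∈ Fik p g i k ↔ x ∈ Gcoset p g i ∧ x + 1 ∈ Gcoset p g k := by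
  simp [Fik]

lemma transNum_eq (hp : p.Prime) (hp6 : p % 6 = 1)
    (hg : ∀ x : ZMod p, x ≠ 0 → ∃ j : ℕ, x = g ^ j) (i k : ZMod 3) :
    haveI : Fact p.Prime := ⟨hp⟩
    transNum p g 1 i k = (Fik p g i k).card := by
  haveI : Fact p.Prime := ⟨hp⟩
  have h7 := p_ge hp hp6
  have e : {b : ℕ // 1 ≤ b ∧ b ≤ p - 1 ∧ b ≠ p - 1 ∧
      (b : ZMod p) ∈ Gcoset p g i ∧ (b : ZMod p) + ((1:ℕ) : ZMod p) ∈ Gcoset p g k} ≃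
      {x : ZMod p // x ∈ Gcoset p g i ∧ x + 1 ∈ Gcoset p g k} := by
    refine ⟨fun b => ⟨(b.1 : ZMod p), b.2.2.2.2.1, by
        simpa using b.2.2.2.2.2⟩,
      fun x => ⟨x.1.val, ?_, ?_, ?_, ?_, ?_⟩, ?_, ?_⟩
    · have hx0 : x.1 ≠ 0 := by
        intro h; exact zero_not_mem hp hp6 hg i (h ▸ x.2.1)
      have : x.1.val ≠ 0 := by
        intro h
        exact hx0 ((ZMod.val_eq_zero x.1).mp h)
      omega
    · have := ZMod.val_lt x.1; omega
    · intro h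
      have hcast : ((x.1.val : ℕ) : ZMod p) = x.1 := by
        simp [ZMod.natCast_val, ZMod.cast_id]
      have hneg : x.1 = -1 := by
        rw [← hcast, h, Nat.cast_sub hp.one_le, ZMod.natCast_self, Nat.cast_one, zero_sub]
      have : x.1 + 1 = 0 := by rw [hneg]; ring
      exact zero_not_mem hp hp6 hg k (this ▸ x.2.2)
    · simpa [ZMod.natCast_val, ZMod.cast_id] using x.2.1
    · have := x.2.2
      rw [Nat.cast_one]
      simpa [ZMod.natCast_val, ZMod.cast_id] using this
    · intro b
      ext
      simp only
      rw [ZMod.val_natCast, Nat.mod_eq_of_lt (by have := b.2.2.1; omega)]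
    · intro x
      ext
      simp [ZMod.natCast_val, ZMod.cast_id]
  rw [transNum, Nat.card_congr e, Nat.card_eq_fintype_card, Fintype.card_subtype]
  rfl

lemma card_sym (hp : p.Prime) (hp6 : p % 6 = 1)
    (hg : ∀ x : ZMod p, x ≠ 0 → ∃ j : ℕ, x = g ^ j) (i k : ZMod 3) :
    haveI : Fact p.Prime := ⟨hp⟩
    (Fik p g i k).card = (Fik p g k i).card := by
  haveI : Fact p.Prime := ⟨hp⟩
  have hneg1 := neg_one_mem hp hp6 hg
  have key : ∀ (a b : ZMod 3) (x : ZMod p), x ∈ Fik p g a b → -(x+1) ∈ Fik p g b a := by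
    intro a b x hx
    rw [mem_Fik] at hx ⊢
    constructor
    · have := mul_mem hneg1 hx.2
      rwa [neg_one_mul, zero_add] at this
    · have := mul_mem hneg1 hx.1
      rw [neg_one_mul, zero_add] at this
      have he : -(x+1)+1 = -x := by ring
      rw [he]; exact this
  refine Finset.card_bij' (fun x _ => -(x+1)) (fun x _ => -(x+1))
    (fun x hx => key i k x hx) (fun x hx => key k i x hx) ?_ ?_
  · intro a _; ring
  · intro a _; ring

lemma card_invsym (hp : p.Prime) (hp6 : p % 6 = 1)
    (hg : ∀ x : ZMod p, x ≠ 0 → ∃ j : ℕ, x = g ^ j) (i k : ZMod 3) :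
    haveI : Fact p.Prime := ⟨hp⟩
    (Fik p g i k).card = (Fik p g (-i) (k-i)).card := by
  haveI : Fact p.Prime := ⟨hp⟩
  have key : ∀ (a b : ZMod 3) (x : ZMod p), x ∈ Fik p g a b → x⁻¹ ∈ Fik p g (-a) (b-a) := by
    intro a b x hx
    rw [mem_Fik] at hx ⊢
    have hx0 : x ≠ 0 := by
      intro h; exact zero_not_mem hp hp6 hg a (h ▸ hx.1)
    refine ⟨inv_mem hp hp6 hg hx.1, ?_⟩
    have h1 : x⁻¹ + 1 = x⁻¹ * (x + 1) := by
      field_simp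
      ring
    rw [h1, show b - a = -a + b from by ring]
    exact mul_mem (inv_mem hp hp6 hg hx.1) hx.2
  refine Finset.card_bij' (fun x _ => x⁻¹) (fun x _ => x⁻¹)
    (fun x hx => key i k x hx) ?_ ?_ ?_
  · intro x hx
    have := key (-i) (k-i) x hx
    rwa [neg_neg, sub_neg_eq_add, sub_add_cancel] at this
  · intro a _; exact inv_inv a
  · intro a _; exact inv_inv a

lemma card_row (hp : p.Prime) (hp6 : p % 6 = 1)
    (hg : ∀ x : ZMod p, x ≠ 0 → ∃ j : ℕ, x = g ^ j) (i : ZMod 3) :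
    haveI : Fact p.Prime := ⟨hp⟩
    (Fik p g i 0).card + (Fik p g i 1).card + (Fik p g i 2).card
      = (p - 1) / 3 - (if i = 0 then 1 else 0) := by
  haveI : Fact p.Prime := ⟨hp⟩
  have h7 := p_ge hp hp6
  have hdisj : ∀ k₁ k₂ : ZMod 3, k₁ ≠ k₂ → Disjoint (Fik p g i k₁) (Fik p g i k₂) := by
    intro k₁ k₂ hk
    rw [Finset.disjoint_left]
    intro x h1 h2
    rw [mem_Fik] at h1 h2
    exact hk (coset_unique hp hp6 hg h1.2 h2.2)
  have hun : (Fik p g i 0 ∪ Fik p g i 1) ∪ Fik p g i 2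
      = univ.filter (fun x : ZMod p => x ∈ Gcoset p g i ∧ x ≠ -1) := by
    ext x
    simp only [Finset.mem_union, mem_Fik, mem_filter, mem_univ, true_and]
    constructor
    · rintro ((⟨h1, h2⟩ | ⟨h1, h2⟩) | ⟨h1, h2⟩) <;>
      · refine ⟨h1, fun hx => ?_⟩
        rw [hx] at h2
        simp only [neg_add_cancel] at h2
        exact zero_not_mem hp hp6 hg _ h2
    · rintro ⟨h1, h2⟩
      have hx1 : x + 1 ≠ 0 := fun h => h2 (by linear_combination h)
      obtain ⟨j, hj⟩ := hg _ hx1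
      have hmem : x + 1 ∈ Gcoset p g ((j : ZMod 3)) := ⟨j, rfl, hj⟩
      have h3 : (j : ZMod 3) = 0 ∨ (j : ZMod 3) = 1 ∨ (j : ZMod 3) = 2 := by
        generalize (j : ZMod 3) = c; revert c; decide
      rcases h3 with h | h | h
      · exact Or.inl (Or.inl ⟨h1, h ▸ hmem⟩)
      · exact Or.inl (Or.inr ⟨h1, h ▸ hmem⟩)
      · exact Or.inr ⟨h1, h ▸ hmem⟩
  have hd01 : Disjoint (Fik p g i 0) (Fik p g i 1) := hdisj 0 1 (by decide)
  have hd2 : Disjoint (Fik p g i 0 ∪ Fik p g i 1) (Fik p g i 2) := by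
    rw [Finset.disjoint_union_left]
    exact ⟨hdisj 0 2 (by decide), hdisj 1 2 (by decide)⟩
  have hcards : (Fik p g i 0).card + (Fik p g i 1).card + (Fik p g i 2).card
      = ((Fik p g i 0 ∪ Fik p g i 1) ∪ Fik p g i 2).card := by
    rw [Finset.card_union_of_disjoint hd2, Finset.card_union_of_disjoint hd01]
  rw [hcards, hun]
  have herase : univ.filter (fun x : ZMod p => x ∈ Gcoset p g i ∧ x ≠ -1)
      = (univ.filter (fun x : ZMod p => x ∈ Gcoset p g i)).erase (-1) := by
    ext x
    simp only [mem_filter, mem_univ, true_and, Finset.mem_erase]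
    tauto
  rw [herase]
  by_cases hi : i = 0
  · subst hi
    have hmem : (-1 : ZMod p) ∈ univ.filter (fun x : ZMod p => x ∈ Gcoset p g 0) := by
      simp only [mem_filter, mem_univ, true_and]
      exact neg_one_mem hp hp6 hg
    rw [Finset.card_erase_of_mem hmem, card_coset hp hp6 hg 0, if_pos rfl]
  · have hnm : (-1 : ZMod p) ∉ univ.filter (fun x : ZMod p => x ∈ Gcoset p g i) := by
      simp only [mem_filter, mem_univ, true_and]
      intro h
      exact hi (coset_unique hp hp6 hg h (neg_one_mem hp hp6 hg))
    rw [Finset.erase_eq_of_notMem hnm, card_coset hp hp6 hg i, if_neg hi, Nat.sub_zero]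

end Stmt4

theorem stmt_4 (p : ℕ) (hp : p.Prime) (hp6 : p % 6 = 1)
    (g : ZMod p) (hg : ∀ x : ZMod p, x ≠ 0 → ∃ j : ℕ, x = g ^ j)
    (s : ℕ) (hs : s = (p - 1) / 3) :
    (transNum p g 1 0 0 : ℤ) = s - 1 - transNum p g 1 0 1 - transNum p g 1 0 2 ∧
    transNum p g 1 1 1 = transNum p g 1 0 2 ∧ transNum p g 1 2 0 = transNum p g 1 0 2 ∧
    transNum p g 1 2 2 = transNum p g 1 0 1 ∧ transNum p g 1 1 0 = transNum p g 1 0 1 ∧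
    (transNum p g 1 1 2 : ℤ) = s - transNum p g 1 0 1 - transNum p g 1 0 2 ∧
    (transNum p g 1 2 1 : ℤ) = s - transNum p g 1 0 1 - transNum p g 1 0 2 := by
  haveI : Fact p.Prime := ⟨hp⟩
  have h7 := Stmt4.p_ge hp hp6
  have ht : ∀ i k : ZMod 3, transNum p g 1 i k = (Stmt4.Fik p g i k).card :=
    fun i k => Stmt4.transNum_eq hp hp6 hg i k
  have hsym : ∀ i k, (Stmt4.Fik p g i k).card = (Stmt4.Fik p g k i).card := fun i k => Stmt4.card_sym hp hp6 hg i k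
  have hinv : ∀ i k, (Stmt4.Fik p g i k).card = (Stmt4.Fik p g (-i) (k - i)).card := fun i k => Stmt4.card_invsym hp hp6 hg i k
  have hrow0 : (Stmt4.Fik p g 0 0).card + (Stmt4.Fik p g 0 1).card + (Stmt4.Fik p g 0 2).card = s - 1 := by
    have h := Stmt4.card_row hp hp6 hg 0
    rw [if_pos rfl] at h
    rw [hs]; exact h
  have hrow1 : (Stmt4.Fik p g 1 0).card + (Stmt4.Fik p g 1 1).card + (Stmt4.Fik p g 1 2).card = s := by
    have h := Stmt4.card_row hp hp6 hg 1
    rw [if_neg (by decide)] at h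
    rw [hs]; omega
  have hs2 : 2 ≤ s := by rw [hs]; omega
  have h11 : (Stmt4.Fik p g 1 1).card = (Stmt4.Fik p g 0 2).card := by
    have h := hinv 1 1
    rw [show ((1:ZMod 3) - 1) = 0 from by decide, show (-1 : ZMod 3) = 2 from by decide] at h
    rw [h]; exact hsym 2 0
  have h22 : (Stmt4.Fik p g 2 2).card = (Stmt4.Fik p g 0 1).card := by
    have h := hinv 2 2
    rw [show ((2:ZMod 3) - 2) = 0 from by decide, show (-2 : ZMod 3) = 1 from by decide] at h
    rw [h]; exact hsym 1 0
  have h10 : (Stmt4.Fik p g 1 0).card = (Stmt4.Fik p g 0 1).card := hsym 1 0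
  have h20 : (Stmt4.Fik p g 2 0).card = (Stmt4.Fik p g 0 2).card := hsym 2 0
  have h21 : (Stmt4.Fik p g 2 1).card = (Stmt4.Fik p g 1 2).card := hsym 2 1
  simp only [ht]
  refine ⟨by omega, by omega, by omega, by omega, by omega, by omega, by omega⟩
end

section
/- Let p be a prime with p ≡ 1 (mod 6) and let n₀₁, n₀₂, n₁₂ be the transition numbers of the cubic residue cosets. Then n₀₁·n₀₂ + n₀₁·n₁₂ + n₀₂·n₁₂ = n₀₁² + n₀₂² + n₁₂² - n₁₂. -/
/-!
Write `N(i, k)` for the cyclotomic numbers of order 3 and `f = |G₀|`. Since `-1 = (-1)³` lies in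
`G₀`, `x ↦ -1 - x` gives `N(i, k) = N(k, i)`, and `x ↦ x⁻¹` gives `N(i, k) = N(-i, k - i)`. This
leaves `A = N(0,0)`, `B = N(0,1)`, `C = N(0,2)`, `D = N(1,2)`, and comparing the row sums
`∑ₖ N(i, k) = f - [-1 ∈ Gᵢ]` for `i = 0, 1` gives `D = A + 1`. Counting the solutions of
`x + y + z + w = 0` with `x, y ∈ G₀`, `z ∈ G₁`, `w ∈ G₂` by the class of `x + y`, and again by the
class of `x + z`, gives `f (AD + B² + C²) = f (BC + CD + DB)`, because for `s ∈ Gₖ` the number of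
ways to write `s = x + y` with `x ∈ Gᵢ`, `y ∈ Gⱼ` is `N(j - k, i - k)`.
-/

namespace CubicCyclotomic

open Finset

variable {p : ℕ} {g : ZMod p}

lemma mul_mem_Gcoset {x y : ZMod p} {i k : ZMod 3} (hx : x ∈ Gcoset p g i)
    (hy : y ∈ Gcoset p g k) : x * y ∈ Gcoset p g (i + k) := by
  obtain ⟨a, rfl, rfl⟩ := hx
  obtain ⟨b, rfl, rfl⟩ := hy
  exact ⟨a + b, by push_cast; rfl, (pow_add g a b).symm⟩

lemma one_mem_Gcoset_zero : (1 : ZMod p) ∈ Gcoset p g 0 :=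
  ⟨0, Nat.cast_zero, (pow_zero g).symm⟩

lemma pow_mem_Gcoset (i : ZMod 3) : g ^ i.val ∈ Gcoset p g i :=
  ⟨i.val, ZMod.natCast_zmod_val i, rfl⟩

structure CubicSetup (p : ℕ) (g : ZMod p) : Prop where
  generates : ∀ x : ZMod p, x ≠ 0 → ∃ j : ℕ, x = g ^ j
  three_dvd : 3 ∣ p - 1

namespace CubicSetup

variable [Fact p.Prime]

lemma two_lt (S : CubicSetup p g) : 2 < p := by
  have := S.three_dvd
  have := (Fact.out : p.Prime).two_le
  omega

lemma generator_ne_zero (S : CubicSetup p g) : g ≠ 0 := by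
  have : Fact (2 < p) := ⟨S.two_lt⟩
  rintro rfl
  obtain ⟨j, hj⟩ := S.generates (-1) (neg_ne_zero.mpr one_ne_zero)
  rcases j with _ | j
  · exact ZMod.neg_one_ne_one (by simpa using hj)
  · simp at hj

lemma orderOf_generator (S : CubicSetup p g) :
    orderOf (Units.mk0 g S.generator_ne_zero) = p - 1 := by
  rw [orderOf_eq_card_of_forall_mem_zpowers, Nat.card_units, Nat.card_zmod]
  intro x
  obtain ⟨j, hj⟩ := S.generates x x.ne_zero
  exact ⟨j, Units.ext (by simp [hj])⟩

lemma ne_zero_of_mem (S : CubicSetup p g) {x : ZMod p} {i : ZMod 3}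
    (hx : x ∈ Gcoset p g i) : x ≠ 0 := by
  obtain ⟨j, -, rfl⟩ := hx
  exact pow_ne_zero j S.generator_ne_zero

lemma exists_mem (S : CubicSetup p g) {x : ZMod p} (hx : x ≠ 0) :
    ∃ i, x ∈ Gcoset p g i := by
  obtain ⟨j, hj⟩ := S.generates x hx
  exact ⟨j, j, rfl, hj⟩

lemma eq_of_mem_of_mem (S : CubicSetup p g) {x : ZMod p} {i k : ZMod 3}
    (hi : x ∈ Gcoset p g i) (hk : x ∈ Gcoset p g k) : i = k := by
  obtain ⟨a, rfl, rfl⟩ := hi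
  obtain ⟨b, rfl, hab⟩ := hk
  have hu : Units.mk0 g S.generator_ne_zero ^ a = Units.mk0 g S.generator_ne_zero ^ b :=
    Units.ext (by simpa using hab)
  rw [pow_eq_pow_iff_modEq, S.orderOf_generator] at hu
  exact (ZMod.natCast_eq_natCast_iff a b 3).mpr (hu.of_dvd S.three_dvd)

lemma mem_iff_eq (S : CubicSetup p g) {x : ZMod p} {i k : ZMod 3}
    (hi : x ∈ Gcoset p g i) : x ∈ Gcoset p g k ↔ i = k :=
  ⟨S.eq_of_mem_of_mem hi, fun h => h ▸ hi⟩

lemma inv_mem (S : CubicSetup p g) {x : ZMod p} {i : ZMod 3}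
    (hx : x ∈ Gcoset p g i) : x⁻¹ ∈ Gcoset p g (-i) := by
  have hx0 := S.ne_zero_of_mem hx
  obtain ⟨k, hk⟩ := S.exists_mem (inv_ne_zero hx0)
  have h1 : (1 : ZMod p) ∈ Gcoset p g (i + k) := by
    simpa [mul_inv_cancel₀ hx0] using mul_mem_Gcoset hx hk
  have hik := S.eq_of_mem_of_mem one_mem_Gcoset_zero h1
  rwa [show k = -i by linear_combination -hik] at hk

lemma inv_mem_iff (S : CubicSetup p g) {x : ZMod p} {i : ZMod 3} :
    x⁻¹ ∈ Gcoset p g i ↔ x ∈ Gcoset p g (-i) :=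
  ⟨fun h => by simpa using S.inv_mem h, fun h => by simpa using S.inv_mem h⟩

lemma mul_mem_iff (S : CubicSetup p g) {s u : ZMod p} {i k : ZMod 3}
    (hs : s ∈ Gcoset p g k) : s * u ∈ Gcoset p g i ↔ u ∈ Gcoset p g (i - k) := by
  refine ⟨fun h => ?_, fun h => by simpa using mul_mem_Gcoset hs h⟩
  have := mul_mem_Gcoset (S.inv_mem hs) h
  rwa [inv_mul_cancel_left₀ (S.ne_zero_of_mem hs), neg_add_eq_sub] at this

lemma neg_one_mem (S : CubicSetup p g) : (-1 : ZMod p) ∈ Gcoset p g 0 := by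
  obtain ⟨k, hk⟩ := S.exists_mem (neg_ne_zero.mpr one_ne_zero)
  have := mul_mem_Gcoset (mul_mem_Gcoset hk hk) hk
  rwa [show (-1 : ZMod p) * -1 * -1 = -1 by ring,
    (by decide : ∀ k : ZMod 3, k + k + k = 0) k] at this

lemma neg_mem_iff (S : CubicSetup p g) {x : ZMod p} {i : ZMod 3} :
    -x ∈ Gcoset p g i ↔ x ∈ Gcoset p g i := by
  rw [← neg_one_mul, S.mul_mem_iff S.neg_one_mem, sub_zero]

end CubicSetup

open scoped Classical in
noncomputable def chi (p : ℕ) (g : ZMod p) (i : ZMod 3) (x : ZMod p) : ℕ :=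
  if x ∈ Gcoset p g i then 1 else 0

open scoped Classical in
noncomputable def cosetFinset (p : ℕ) [NeZero p] (g : ZMod p) (i : ZMod 3) :
    Finset (ZMod p) :=
  univ.filter (· ∈ Gcoset p g i)

lemma mem_cosetFinset [NeZero p] {i : ZMod 3} {x : ZMod p} :
    x ∈ cosetFinset p g i ↔ x ∈ Gcoset p g i := by
  simp [cosetFinset]

noncomputable def cycNum (p : ℕ) [NeZero p] (g : ZMod p) (i k : ZMod 3) : ℕ :=
  ∑ x, chi p g i x * chi p g k (x + 1)

noncomputable def reprCount (p : ℕ) [NeZero p] (g : ZMod p) (i j : ZMod 3) (s : ZMod p) : ℕ :=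
  ∑ x, chi p g i x * chi p g j (s - x)

lemma sum_zmod_three {M : Type*} [AddCommMonoid M] (f : ZMod 3 → M) :
    ∑ k, f k = f 0 + f 1 + f 2 :=
  Fin.sum_univ_three f

lemma sum_conv_mul_conv_eq {G R : Type*} [AddCommGroup G] [Fintype G] [CommSemiring R]
    (a b c d : G → R) :
    ∑ s, (∑ x, a x * b (s - x)) * (∑ z, c z * d (-s - z))
      = ∑ x, ∑ y, ∑ z, a x * b y * c z * d (-(x + y + z)) := by
  simp only [sum_mul_sum]
  refine sum_comm.trans <| sum_congr rfl fun x _ =>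
    Fintype.sum_equiv (Equiv.subRight x) _ _ fun s => sum_congr rfl fun z _ => ?_
  rw [Equiv.subRight_apply, show -(x + (s - x) + z) = -s - z by abel]
  ring

lemma sum_conv_mul_conv_comm {G R : Type*} [AddCommGroup G] [Fintype G] [CommSemiring R]
    (a b c d : G → R) :
    ∑ s, (∑ x, a x * b (s - x)) * (∑ z, c z * d (-s - z))
      = ∑ s, (∑ x, a x * c (s - x)) * (∑ z, b z * d (-s - z)) := by
  rw [sum_conv_mul_conv_eq, sum_conv_mul_conv_eq]
  refine sum_congr rfl fun x _ => ?_
  rw [sum_comm]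
  refine sum_congr rfl fun y _ => sum_congr rfl fun z _ => ?_
  rw [add_right_comm]
  ring

namespace CubicSetup

variable [Fact p.Prime]

lemma chi_zero (S : CubicSetup p g) (i : ZMod 3) : chi p g i 0 = 0 :=
  if_neg fun h => S.ne_zero_of_mem h rfl

lemma chi_neg (S : CubicSetup p g) (i : ZMod 3) (x : ZMod p) :
    chi p g i (-x) = chi p g i x := by
  classical
  exact if_congr S.neg_mem_iff rfl rfl

lemma chi_inv (S : CubicSetup p g) (i : ZMod 3) (x : ZMod p) :
    chi p g i x⁻¹ = chi p g (-i) x := by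
  classical
  exact if_congr S.inv_mem_iff rfl rfl

lemma chi_mul (S : CubicSetup p g) {s : ZMod p} {k : ZMod 3} (hs : s ∈ Gcoset p g k)
    (i : ZMod 3) (u : ZMod p) : chi p g i (s * u) = chi p g (i - k) u := by
  classical
  exact if_congr (S.mul_mem_iff hs) rfl rfl

lemma chi_mul_chi_of_ne (S : CubicSetup p g) {i k : ZMod 3} (hik : i ≠ k) (x : ZMod p) :
    chi p g i x * chi p g k x = 0 := by
  by_cases hx : x ∈ Gcoset p g i
  · simp [chi, S.mem_iff_eq hx, hik]
  · simp [chi, hx]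

lemma sum_chi_eq_ite (S : CubicSetup p g) (x : ZMod p) :
    ∑ i, chi p g i x = if x = 0 then 0 else 1 := by
  by_cases hx : x = 0
  · simp [hx, S.chi_zero]
  · obtain ⟨i, hi⟩ := S.exists_mem hx
    simp [chi, S.mem_iff_eq hi, hx]

lemma card_cosetFinset (S : CubicSetup p g) (i : ZMod 3) :
    #(cosetFinset p g i) = #(cosetFinset p g 0) := by
  have hs : g ^ i.val ∈ Gcoset p g i := pow_mem_Gcoset i
  have himage : (cosetFinset p g 0).image (g ^ i.val * ·) = cosetFinset p g i := by
    ext y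
    simp only [mem_image, mem_cosetFinset]
    constructor
    · rintro ⟨x, hx, rfl⟩
      simpa using mul_mem_Gcoset hs hx
    · intro hy
      refine ⟨(g ^ i.val)⁻¹ * y, ?_, mul_inv_cancel_left₀ (S.ne_zero_of_mem hs) y⟩
      simpa using mul_mem_Gcoset (S.inv_mem hs) hy
  rw [← himage, card_image_of_injective _ (mul_right_injective₀ (S.ne_zero_of_mem hs))]

lemma sum_chi (S : CubicSetup p g) (i : ZMod 3) :
    ∑ x, chi p g i x = #(cosetFinset p g 0) := by
  rw [← S.card_cosetFinset i, cosetFinset, card_filter]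
  rfl

lemma sum_univ_eq_add_sum_cosetFinset (S : CubicSetup p g) {M : Type*} [AddCommMonoid M]
    (F : ZMod p → M) : ∑ s, F s = F 0 + ∑ k, ∑ s ∈ cosetFinset p g k, F s := by
  have hunion : univ.erase 0 = univ.biUnion (cosetFinset p g) := by
    ext x
    simp only [mem_erase, mem_univ, and_true, mem_biUnion, true_and, mem_cosetFinset]
    exact ⟨S.exists_mem, fun ⟨_, hi⟩ => S.ne_zero_of_mem hi⟩
  have hdisj : Set.PairwiseDisjoint ↑(univ : Finset (ZMod 3)) (cosetFinset p g) :=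
    fun i _ k _ hik => disjoint_left.mpr fun _ hi hk =>
      hik (S.eq_of_mem_of_mem (mem_cosetFinset.mp hi) (mem_cosetFinset.mp hk))
  rw [← add_sum_erase univ F (mem_univ 0), hunion, sum_biUnion hdisj]

lemma cycNum_comm (S : CubicSetup p g) (i k : ZMod 3) : cycNum p g i k = cycNum p g k i :=
  Fintype.sum_equiv ((Equiv.addRight 1).trans (Equiv.neg _)) _ _ fun x => by
    rw [Equiv.trans_apply, Equiv.coe_addRight, Equiv.neg_apply, S.chi_neg,
      show -(x + 1) + 1 = -x by ring, S.chi_neg, mul_comm]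

lemma cycNum_inv (S : CubicSetup p g) (i k : ZMod 3) :
    cycNum p g i k = cycNum p g (-i) (k - i) :=
  Fintype.sum_equiv (Equiv.inv _) _ _ fun x => by
    rw [Equiv.inv_apply, S.chi_inv, neg_neg]
    by_cases hx : x ∈ Gcoset p g i
    · rw [show x + 1 = x * (x⁻¹ + 1) by field_simp [S.ne_zero_of_mem hx]; ring, S.chi_mul hx]
    · simp [chi, hx]

lemma sum_cycNum_add_chi_neg_one (S : CubicSetup p g) (i : ZMod 3) :
    ∑ k, cycNum p g i k + chi p g i (-1) = #(cosetFinset p g 0) := by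
  have hpoint : ∀ x : ZMod p, chi p g i x * (if x + 1 = 0 then 0 else 1)
      + (if x = -1 then chi p g i x else 0) = chi p g i x := by
    intro x
    by_cases hx : x = -1
    · simp [hx]
    · simp [hx, eq_neg_iff_add_eq_zero.not.mp hx]
  simp only [cycNum]
  rw [sum_comm, ← S.sum_chi i, ← sum_congr rfl fun x _ => hpoint x, sum_add_distrib,
    sum_ite_eq' univ (-1 : ZMod p)]
  simp only [← mul_sum, S.sum_chi_eq_ite, mem_univ, if_true]

lemma reprCount_of_mem (S : CubicSetup p g) {s : ZMod p} {k : ZMod 3} (hs : s ∈ Gcoset p g k)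
    (i j : ZMod 3) : reprCount p g i j s = cycNum p g (j - k) (i - k) :=
  (Fintype.sum_equiv ((Equiv.addRight 1).trans (Equiv.mulLeft₀ s (S.ne_zero_of_mem hs))) _ _
    fun t => by
      simp only [Equiv.trans_apply, Equiv.coe_addRight, Equiv.mulLeft₀_apply]
      rw [S.chi_mul hs, show s - s * (t + 1) = s * -t by ring, S.chi_mul hs, S.chi_neg,
        mul_comm]).symm

lemma reprCount_zero_of_ne (S : CubicSetup p g) {i j : ZMod 3} (hij : i ≠ j) :
    reprCount p g i j 0 = 0 :=
  sum_eq_zero fun x _ => by rw [zero_sub, S.chi_neg, S.chi_mul_chi_of_ne hij]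

lemma sum_reprCount_mul_reprCount_neg (S : CubicSetup p g) {i j i' j' : ZMod 3}
    (h : i ≠ j ∨ i' ≠ j') :
    ∑ s, reprCount p g i j s * reprCount p g i' j' (-s)
      = #(cosetFinset p g 0) *
          ∑ k, cycNum p g (j - k) (i - k) * cycNum p g (j' - k) (i' - k) := by
  have hzero : reprCount p g i j 0 * reprCount p g i' j' (-0) = 0 := by
    rcases h with h | h
    · rw [S.reprCount_zero_of_ne h, zero_mul]
    · rw [neg_zero, S.reprCount_zero_of_ne h, mul_zero]
  rw [S.sum_univ_eq_add_sum_cosetFinset, hzero, zero_add, mul_sum]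
  refine sum_congr rfl fun k _ => ?_
  rw [← S.card_cosetFinset k, ← smul_eq_mul, ← sum_const]
  refine sum_congr rfl fun s hs => ?_
  have hs' := mem_cosetFinset.mp hs
  rw [S.reprCount_of_mem hs', S.reprCount_of_mem (S.neg_mem_iff.mpr hs')]

lemma cycNum_one_one (S : CubicSetup p g) : cycNum p g 1 1 = cycNum p g 0 2 :=
  (S.cycNum_inv 1 1).trans (S.cycNum_comm _ _)

lemma cycNum_two_two (S : CubicSetup p g) : cycNum p g 2 2 = cycNum p g 0 1 :=
  (S.cycNum_inv 2 2).trans (S.cycNum_comm _ _)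

lemma cycNum_one_two_eq (S : CubicSetup p g) : cycNum p g 1 2 = cycNum p g 0 0 + 1 := by
  have hrow0 := S.sum_cycNum_add_chi_neg_one 0
  have hrow1 := S.sum_cycNum_add_chi_neg_one 1
  have hchi0 : chi p g 0 (-1) = 1 := if_pos S.neg_one_mem
  have hchi1 : chi p g 1 (-1) = 0 :=
    if_neg fun h => absurd (S.eq_of_mem_of_mem S.neg_one_mem h) (by decide)
  rw [sum_zmod_three, hchi0] at hrow0
  rw [sum_zmod_three, hchi1, S.cycNum_comm 1 0, S.cycNum_one_one] at hrow1
  omega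

lemma cycNum_quadratic (S : CubicSetup p g) :
    cycNum p g 0 0 * cycNum p g 1 2 + cycNum p g 0 1 ^ 2 + cycNum p g 0 2 ^ 2
      = cycNum p g 0 1 * cycNum p g 0 2 + cycNum p g 0 2 * cycNum p g 1 2
        + cycNum p g 1 2 * cycNum p g 0 1 := by
  have hcount : ∑ s, reprCount p g 0 0 s * reprCount p g 1 2 (-s)
      = ∑ s, reprCount p g 0 1 s * reprCount p g 0 2 (-s) :=
    sum_conv_mul_conv_comm (chi p g 0) (chi p g 0) (chi p g 1) (chi p g 2)
  rw [S.sum_reprCount_mul_reprCount_neg (Or.inr (by decide)),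
    S.sum_reprCount_mul_reprCount_neg (Or.inl (by decide)), sum_zmod_three, sum_zmod_three]
    at hcount
  have hpos : 0 < #(cosetFinset p g 0) :=
    card_pos.mpr ⟨1, mem_cosetFinset.mpr one_mem_Gcoset_zero⟩
  have h := Nat.eq_of_mul_eq_mul_left hpos hcount
  change cycNum p g 0 0 * cycNum p g 2 1 + cycNum p g 2 2 * cycNum p g 1 0
      + cycNum p g 1 1 * cycNum p g 0 2
    = cycNum p g 1 0 * cycNum p g 2 0 + cycNum p g 0 2 * cycNum p g 1 2
      + cycNum p g 2 1 * cycNum p g 0 1 at h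
  rw [S.cycNum_comm 2 1, S.cycNum_comm 1 0, S.cycNum_comm 2 0, S.cycNum_one_one,
    S.cycNum_two_two] at h
  linarith

end CubicSetup

lemma card_lt_and_natCast_eq_card {n : ℕ} [NeZero n] (P : ZMod n → Prop) :
    Nat.card {b : ℕ // b < n ∧ P b} = Nat.card {x : ZMod n // P x} :=
  Nat.card_congr
    { toFun := fun b => ⟨b.1, b.2.2⟩
      invFun := fun x => ⟨x.1.val, x.1.val_lt, by simpa using x.2⟩
      left_inv := fun b => Subtype.ext (by simp [ZMod.val_natCast, Nat.mod_eq_of_lt b.2.1])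
      right_inv := fun x => Subtype.ext (ZMod.natCast_zmod_val x.1) }

lemma CubicSetup.transNum_one_eq_cycNum [Fact p.Prime] (S : CubicSetup p g) (i k : ZMod 3) :
    transNum p g 1 i k = cycNum p g i k := by
  classical
  have hp := (Fact.out : p.Prime).pos
  have hpred : ∀ b : ℕ, (1 ≤ b ∧ b ≤ p - 1 ∧ b ≠ p - 1 ∧ (b : ZMod p) ∈ Gcoset p g i ∧
      (b : ZMod p) + ((1 : ℕ) : ZMod p) ∈ Gcoset p g k) ↔
      (b < p ∧ (b : ZMod p) ∈ Gcoset p g i ∧ (b : ZMod p) + 1 ∈ Gcoset p g k) := by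
    intro b
    rw [Nat.cast_one]
    constructor
    · rintro ⟨-, hb, -, hi, hk⟩
      exact ⟨by omega, hi, hk⟩
    · rintro ⟨hb, hi, hk⟩
      refine ⟨Nat.one_le_iff_ne_zero.mpr ?_, by omega, ?_, hi, hk⟩
      · rintro rfl
        exact S.ne_zero_of_mem hi Nat.cast_zero
      · rintro rfl
        exact S.ne_zero_of_mem hk (by rw [Nat.cast_sub hp]; simp)
  rw [transNum, Nat.card_congr (Equiv.subtypeEquivRight hpred), card_lt_and_natCast_eq_card
      (fun x : ZMod p => x ∈ Gcoset p g i ∧ x + 1 ∈ Gcoset p g k),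
    Nat.card_eq_fintype_card, Fintype.card_subtype, card_filter, cycNum]
  refine sum_congr rfl fun x _ => ?_
  rw [chi, chi, ite_zero_mul_ite_zero, one_mul]

end CubicCyclotomic

theorem stmt_5 (p : ℕ) (hp : p.Prime) (hp6 : p % 6 = 1)
    (g : ZMod p) (hg : ∀ x : ZMod p, x ≠ 0 → ∃ j : ℕ, x = g ^ j)
    (n01 n02 n12 : ℤ) (h01 : n01 = transNum p g 1 0 1)
    (h02 : n02 = transNum p g 1 0 2) (h12 : n12 = transNum p g 1 1 2) :
    n01 * n02 + n01 * n12 + n02 * n12 = n01 ^ 2 + n02 ^ 2 + n12 ^ 2 - n12 := by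
  have : Fact p.Prime := ⟨hp⟩
  have S : CubicCyclotomic.CubicSetup p g := ⟨hg, by omega⟩
  rw [S.transNum_one_eq_cycNum] at h01 h02 h12
  have hlin := congrArg (Nat.cast : ℕ → ℤ) S.cycNum_one_two_eq
  have hquad := congrArg (Nat.cast : ℕ → ℤ) S.cycNum_quadratic
  push_cast at hlin hquad
  subst h01 h02 h12
  linear_combination -hquad - (CubicCyclotomic.cycNum p g 1 2 : ℤ) * hlin
end

section
/- Let p be a prime with p ≡ 1 (mod 6). Then there exist unique integers A, B with A ≡ 1 (mod 3) and B > 0 such that 4p = A² + 27B². -/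
/-!
Existence: since `3 ∣ p - 1`, `ZMod p` contains a primitive cube root of unity `ω`, and
`(2ω + 1)² = -3`. Thue's lemma turns this square root into a representation
`p = a² + 3b²`. As `3 ∤ a`, one of `(2a, 2b/3)`, `(a + 3b, (a - b)/3)`, `(a - 3b, (a + b)/3)`
is integral, and it is a pair `(A, B)` with `4p = A² + 27B²`.

Uniqueness: for two representations, `(AD - BC)(AD + BC) = 4p(D² - B²)`, and the identity
`16p² = (AC ± 27BD)² + 27(AD ∓ BC)²` forces the factor divisible by `p` to vanish.
-/

theorem ZMod.exists_sq_eq_neg_three {p : ℕ} [Fact p.Prime] (hp3 : p % 3 = 1) :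
    ∃ t : ZMod p, t ^ 2 = -3 := by
  have := Fact.mk Nat.prime_three
  obtain ⟨ω, hω⟩ := exists_prime_orderOf_dvd_card (G := (ZMod p)ˣ) 3
    (by rw [ZMod.card_units]; omega)
  have hω3 : IsPrimitiveRoot (ω : ZMod p) 3 :=
    IsPrimitiveRoot.coe_units_iff.mpr (hω ▸ IsPrimitiveRoot.orderOf ω)
  have h := hω3.geom_sum_eq_zero (by norm_num)
  simp only [Finset.sum_range_succ, Finset.sum_range_zero] at h
  exact ⟨2 * ω + 1, by linear_combination 4 * h⟩

/-- Thue's lemma. -/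
theorem ZMod.exists_sq_lt_intCast_eq_mul (n : ℕ) [NeZero n] (hn : ¬IsSquare n) (t : ZMod n) :
    ∃ x y : ℤ, (x ≠ 0 ∨ y ≠ 0) ∧ x ^ 2 < n ∧ y ^ 2 < n ∧ (x : ZMod n) = t * y := by
  set m := n.sqrt
  have hm : m ^ 2 < n := (Nat.sqrt_le' n).lt_of_ne fun h => hn ⟨m, by rw [← h, sq]⟩
  obtain ⟨u, v, huv, heq⟩ := Fintype.exists_ne_map_eq_of_card_lt
    (fun u : Fin (m + 1) × Fin (m + 1) => ((u.1 : ℕ) : ZMod n) - t * (u.2 : ℕ))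
    (by simpa [ZMod.card, sq] using Nat.lt_succ_sqrt' n)
  have hsq (a b : Fin (m + 1)) : (((a : ℕ) : ℤ) - (b : ℕ)) ^ 2 < n := by
    have := a.isLt
    have := b.isLt
    calc (((a : ℕ) : ℤ) - (b : ℕ)) ^ 2 ≤ (m : ℤ) ^ 2 := sq_le_sq' (by omega) (by omega)
      _ < n := by exact_mod_cast hm
  refine ⟨(u.1 : ℕ) - (v.1 : ℕ), (u.2 : ℕ) - (v.2 : ℕ), ?_, hsq _ _, hsq _ _, ?_⟩
  · contrapose! huv
    ext <;> omega
  · push_cast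
    linear_combination heq

theorem Nat.Prime.exists_eq_sq_add_three_mul_sq {p : ℕ} (hp : p.Prime) (hp3 : p % 3 = 1) :
    ∃ a b : ℤ, (p : ℤ) = a ^ 2 + 3 * b ^ 2 := by
  have := Fact.mk hp
  obtain ⟨t, ht⟩ := ZMod.exists_sq_eq_neg_three hp3
  obtain ⟨x, y, hxy, hx, hy, hcong⟩ :=
    ZMod.exists_sq_lt_intCast_eq_mul p hp.prime.not_isSquare t
  obtain ⟨k, hk⟩ : (p : ℤ) ∣ x ^ 2 + 3 * y ^ 2 := by
    rw [← ZMod.intCast_zmod_eq_zero_iff_dvd]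
    push_cast
    rw [hcong]
    linear_combination y ^ 2 * ht
  have hpos : 0 < x ^ 2 + 3 * y ^ 2 := by rcases hxy with h | h <;> positivity
  obtain rfl | rfl | rfl : k = 1 ∨ k = 2 ∨ k = 3 := by
    have : 0 < k := by nlinarith
    have : k < 4 := by nlinarith
    omega
  · exact ⟨x, y, by linear_combination -hk⟩
  · -- `x` and `y` have the same parity, so `4 ∣ x² + 3y²`, whereas `2p ≡ 2 (mod 4)`.
    have hodd : p % 2 = 1 := hp.eq_two_or_odd.resolve_left (by omega)
    rcases Int.even_or_odd' x with ⟨a, rfl | rfl⟩ <;>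
      rcases Int.even_or_odd' y with ⟨b, rfl | rfl⟩ <;> ring_nf at hk <;> omega
  · have h3 : (3 : ℤ) ∣ x ^ 2 := ⟨p - y ^ 2, by linear_combination hk⟩
    obtain ⟨z, rfl⟩ := Int.prime_three.dvd_of_dvd_pow h3
    exact ⟨y, z, by linarith⟩

theorem exists_four_mul_sq_add_three_mul_sq_eq_sq_add_twenty_seven_mul_sq (a b : ℤ)
    (ha : ¬(3 : ℤ) ∣ a) :
    ∃ A B : ℤ, ¬(3 : ℤ) ∣ A ∧ 4 * (a ^ 2 + 3 * b ^ 2) = A ^ 2 + 27 * B ^ 2 := by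
  obtain ⟨c, hc⟩ | ⟨c, hc⟩ | ⟨c, hc⟩ :
      (3 : ℤ) ∣ b ∨ (3 : ℤ) ∣ a - b ∨ (3 : ℤ) ∣ a + b := by
    rcases (by omega : b % 3 = 0 ∨ b % 3 = 1 ∨ b % 3 = 2) with h | h | h <;> omega
  · exact ⟨2 * a, 2 * c, by omega, by rw [hc]; ring⟩
  · exact ⟨a + 3 * b, c, by omega, by linear_combination 3 * (a - b + 3 * c) * hc⟩
  · exact ⟨a - 3 * b, c, by omega, by linear_combination 3 * (a + b + 3 * c) * hc⟩

theorem sq_ne_four_mul_of_prime {p : ℤ} (hp : Prime p) (A : ℤ) : A ^ 2 ≠ 4 * p := by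
  intro h
  obtain ⟨c, rfl⟩ : (2 : ℤ) ∣ A :=
    Int.prime_two.dvd_of_dvd_pow (show (2 : ℤ) ∣ A ^ 2 from ⟨2 * p, by rw [h]; ring⟩)
  exact hp.not_isSquare ⟨c, by linarith⟩

theorem exists_emod_three_eq_one_of_eq_sq_add_twenty_seven_mul_sq {N A B : ℤ}
    (hA : ¬(3 : ℤ) ∣ A) (hB : B ≠ 0) (h : N = A ^ 2 + 27 * B ^ 2) :
    ∃ AB : ℤ × ℤ, AB.1 % 3 = 1 ∧ 0 < AB.2 ∧ N = AB.1 ^ 2 + 27 * AB.2 ^ 2 := by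
  rcases (by omega : A % 3 = 1 ∨ (-A) % 3 = 1) with h3 | h3
  · exact ⟨(A, |B|), h3, abs_pos.mpr hB, by rwa [sq_abs]⟩
  · exact ⟨(-A, |B|), h3, abs_pos.mpr hB, by rwa [sq_abs, neg_sq]⟩

theorem sq_eq_sq_of_four_mul_prime_eq {p A B C D : ℤ} (hp : Prime p) (hp0 : 0 < p)
    (h₁ : 4 * p = A ^ 2 + 27 * B ^ 2) (h₂ : 4 * p = C ^ 2 + 27 * D ^ 2) :
    A ^ 2 = C ^ 2 ∧ B ^ 2 = D ^ 2 := by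
  have hsmall (x : ℤ) (hx : p ∣ x) (hbound : 27 * x ^ 2 ≤ 16 * p ^ 2) : x = 0 :=
    Int.eq_zero_of_abs_lt_dvd hx (abs_lt_of_sq_lt_sq (by nlinarith) hp0.le)
  have hprod : (A * D - B * C) * (A * D + B * C) = p * (4 * (D ^ 2 - B ^ 2)) := by
    linear_combination (-D ^ 2) * h₁ + B ^ 2 * h₂
  have hzero : (A * D - B * C) * (A * D + B * C) = 0 := by
    rcases hp.dvd_mul.mp ⟨_, hprod⟩ with h | h
    · have : 16 * p ^ 2 = (A * C + 27 * B * D) ^ 2 + 27 * (A * D - B * C) ^ 2 := by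
        linear_combination (4 * p) * h₂ + (C ^ 2 + 27 * D ^ 2) * h₁
      rw [hsmall _ h (by nlinarith [sq_nonneg (A * C + 27 * B * D)]), zero_mul]
    · have : 16 * p ^ 2 = (A * C - 27 * B * D) ^ 2 + 27 * (A * D + B * C) ^ 2 := by
        linear_combination (4 * p) * h₂ + (C ^ 2 + 27 * D ^ 2) * h₁
      rw [hsmall _ h (by nlinarith [sq_nonneg (A * C - 27 * B * D)]), mul_zero]
  have hBD : B ^ 2 = D ^ 2 := by
    have := (mul_eq_zero.mp (hprod.symm.trans hzero)).resolve_left hp0.ne'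
    linarith
  exact ⟨by linarith, hBD⟩

theorem stmt_6 (p : ℕ) (hp : p.Prime) (hp6 : p % 6 = 1) :
    ∃! AB : ℤ × ℤ, AB.1 % 3 = 1 ∧ 0 < AB.2 ∧ 4 * (p : ℤ) = AB.1 ^ 2 + 27 * AB.2 ^ 2 := by
  have hpZ : Prime (p : ℤ) := Nat.prime_iff_prime_int.mp hp
  obtain ⟨a, b, hab⟩ := hp.exists_eq_sq_add_three_mul_sq (by omega)
  have ha : ¬(3 : ℤ) ∣ a := by
    rintro ⟨c, rfl⟩
    have : (3 : ℤ) ∣ p := ⟨3 * c ^ 2 + b ^ 2, by linear_combination hab⟩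
    omega
  obtain ⟨A, B, hA, hAB⟩ :=
    exists_four_mul_sq_add_three_mul_sq_eq_sq_add_twenty_seven_mul_sq a b ha
  have hB : B ≠ 0 := by
    rintro rfl
    exact sq_ne_four_mul_of_prime hpZ A (by linear_combination -hAB - 4 * hab)
  obtain ⟨⟨A, B⟩, hA, hB, hAB⟩ :=
    exists_emod_three_eq_one_of_eq_sq_add_twenty_seven_mul_sq hA hB (hab ▸ hAB)
  refine ⟨(A, B), ⟨hA, hB, hAB⟩, ?_⟩
  rintro ⟨C, D⟩ ⟨hC, hD, hCD⟩
  obtain ⟨hAC, hBD⟩ :=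
    sq_eq_sq_of_four_mul_prime_eq hpZ (by exact_mod_cast hp.pos) hAB hCD
  have hDB : D = B := (pow_left_inj₀ hD.le hB.le two_ne_zero).mp hBD.symm
  have hCA : C = A := by rcases sq_eq_sq_iff_eq_or_eq_neg.mp hAC with h | h <;> omega
  rw [hCA, hDB]
end

section
/- Let p be a prime with p ≡ 1 (mod 6) and let n₀₁, n₀₂ be transition numbers of the cubic residue cosets. Then n₀₁ ≠ n₀₂. -/
/-!
Let `χ` be a cubic character of `𝔽_p` and `ω = χ g`, a primitive cube root of unity, so that
`n_{0k}` counts the `x` with `χ x = 1` and `χ (x + 1) = ω ^ k`. Since `χ (-1) = 1`, the Jacobi sum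
is `J = J(χ, χ) = ∑ χ x χ (x + 1) = C₁ + C_ω ω + C_{ω²} ω²`, where `C_c` counts the `x` with
`χ x χ (x + 1) = c`. The substitutions `x ↦ -1 - x` and `x ↦ x⁻¹` permute the pairs of classes and
give `C_ω = 3 n₀₁` and `C_{ω²} = 3 n₀₂`. If `n₀₁ = n₀₂`, then `1 + ω + ω² = 0` makes `J = C₁ - C_ω`
a rational integer, whereas `J · J̄ = p` is not a square.
-/

open Finset

namespace MulChar

variable {F : Type*} [Field F] {χ : MulChar F ℂ}

noncomputable def cyclotomicNumber [Fintype F] (χ : MulChar F ℂ) (a b : ℂ) : ℕ :=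
  #{x | χ x = a ∧ χ (x + 1) = b}

noncomputable def jacobiFiberCard [Fintype F] (χ : MulChar F ℂ) (c : ℂ) : ℕ :=
  #{x | χ x * χ (x + 1) = c}

lemma apply_neg_one_of_pow_three_eq_one (hχ : χ ^ 3 = 1) : χ (-1) = 1 := by
  calc χ (-1) = χ ((-1) ^ 3) := by norm_num
    _ = (χ ^ 3) (-1) := by rw [map_pow, pow_apply' χ three_ne_zero]
    _ = 1 := by rw [hχ, one_apply (isUnit_one.neg)]

lemma apply_neg_of_pow_three_eq_one (hχ : χ ^ 3 = 1) (x : F) : χ (-x) = χ x := by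
  rw [neg_eq_neg_one_mul, map_mul, apply_neg_one_of_pow_three_eq_one hχ, one_mul]

lemma apply_mem_image_pow (hχ : χ ^ 3 = 1) {c : ℂ} (hc : IsPrimitiveRoot c 3) {x : F}
    (hx : x ≠ 0) : χ x ∈ (range 3).image (c ^ ·) := by
  have hx3 : χ x ^ 3 = 1 := by
    rw [← pow_apply' χ three_ne_zero, hχ, one_apply (Ne.isUnit hx)]
  obtain ⟨i, hi, hxi⟩ := hc.eq_pow_of_pow_eq_one hx3
  exact mem_image.mpr ⟨i, mem_range.mpr hi, hxi⟩

lemma isPrimitiveRoot_apply_of_orderOf_eq_three (hχ : orderOf χ = 3) {g : F}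
    (hg : ∀ x : F, x ≠ 0 → ∃ j : ℕ, x = g ^ j) : IsPrimitiveRoot (χ g) 3 := by
  have hχ1 : χ ≠ 1 := by rintro rfl; simp at hχ
  have hg0 : g ≠ 0 := by
    rintro rfl
    refine hχ1 (eq_one_iff.mpr fun a ↦ ?_)
    obtain ⟨j, hj⟩ := hg a a.ne_zero
    obtain rfl : j = 0 := by
      by_contra hj0
      exact a.ne_zero (by rw [hj, zero_pow hj0])
    rw [hj, pow_zero, map_one]
  have hg1 : χ g ≠ 1 := by
    refine fun h1 ↦ hχ1 (eq_one_iff.mpr fun a ↦ ?_)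
    obtain ⟨j, hj⟩ := hg a a.ne_zero
    rw [hj, map_pow, h1, one_pow]
  refine IsPrimitiveRoot.iff_orderOf.mpr (orderOf_eq_prime ?_ hg1)
  rw [← pow_apply' χ three_ne_zero, ← hχ, pow_orderOf_eq_one, one_apply hg0.isUnit]

variable [Fintype F]

lemma jacobiSum_self_eq_sum_add_one (hχ : χ ^ 3 = 1) :
    jacobiSum χ χ = ∑ x, χ x * χ (x + 1) := by
  refine Fintype.sum_equiv (Equiv.neg F) _ _ fun x ↦ ?_
  rw [Equiv.neg_apply, apply_neg_of_pow_three_eq_one hχ, neg_add_eq_sub]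

lemma cyclotomicNumber_comm (hχ : χ ^ 3 = 1) (a b : ℂ) :
    cyclotomicNumber χ a b = cyclotomicNumber χ b a := by
  refine card_equiv (Equiv.subLeft (-1)) fun x ↦ ?_
  simp only [mem_filter_univ, Equiv.subLeft_apply, show -1 - x = -(x + 1) by ring,
    show -(x + 1) + 1 = -x by ring, apply_neg_of_pow_three_eq_one hχ]
  exact and_comm

lemma cyclotomicNumber_inv {a : ℂ} (ha : a ≠ 0) (b : ℂ) :
    cyclotomicNumber χ a b = cyclotomicNumber χ a⁻¹ (b / a) := by
  refine card_equiv (Equiv.inv F) fun x ↦ ?_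
  simp only [mem_filter_univ, Equiv.inv_apply]
  rcases eq_or_ne x 0 with rfl | hx
  · simp [ha.symm]
  rw [← inv_apply', inv_apply_eq_inv', inv_inj, show x⁻¹ + 1 = (x + 1) * x⁻¹ by field_simp; ring,
    map_mul, ← inv_apply', inv_apply_eq_inv', ← div_eq_mul_inv]
  constructor
  · rintro ⟨rfl, rfl⟩; exact ⟨rfl, rfl⟩
  · rintro ⟨rfl, h⟩; exact ⟨rfl, (div_left_inj' ha).mp h⟩

lemma card_filter_mul_apply_add_one_eq_and_apply_eq (c : ℂ) {a : ℂ} (ha : a ≠ 0) :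
    #{x ∈ {x | χ x * χ (x + 1) = c} | χ x = a} = cyclotomicNumber χ a (c / a) := by
  rw [filter_filter, cyclotomicNumber]
  refine congrArg card (filter_congr fun x _ ↦ ?_)
  constructor
  · rintro ⟨h, rfl⟩; exact ⟨rfl, by rw [← h, mul_div_cancel_left₀ _ ha]⟩
  · rintro ⟨rfl, h⟩; exact ⟨by rw [h, mul_div_cancel₀ _ ha], rfl⟩

lemma jacobiFiberCard_eq_three_mul (hχ : χ ^ 3 = 1) {c : ℂ} (hc : IsPrimitiveRoot c 3) :
    jacobiFiberCard χ c = 3 * cyclotomicNumber χ 1 c := by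
  have hc0 : c ≠ 0 := hc.ne_zero three_ne_zero
  have hc3 : c ^ 3 = 1 := hc.pow_eq_one
  -- The fibres `χ x = 1, c, c²` are the classes `(1, c)`, `(c, 1)`, `(c², c²)`, all of one size.
  rw [jacobiFiberCard, card_eq_sum_card_fiberwise (f := χ) fun x hx ↦
      apply_mem_image_pow hχ hc fun h0 ↦ by simp [h0, hc0.symm] at hx,
    sum_image hc.injOn_pow]
  simp only [sum_range_succ, sum_range_zero, pow_zero, pow_one, zero_add]
  rw [card_filter_mul_apply_add_one_eq_and_apply_eq c one_ne_zero,
    card_filter_mul_apply_add_one_eq_and_apply_eq c hc0,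
    card_filter_mul_apply_add_one_eq_and_apply_eq c (pow_ne_zero 2 hc0),
    cyclotomicNumber_inv (pow_ne_zero 2 hc0), div_one, div_self hc0,
    show (c ^ 2)⁻¹ = c by rw [inv_eq_of_mul_eq_one_right]; linear_combination hc3,
    show c / c ^ 2 / c ^ 2 = 1 by field_simp; exact hc3.symm,
    cyclotomicNumber_comm hχ c 1]
  ring

lemma sum_mul_apply_add_one_eq (hχ : χ ^ 3 = 1) {ω : ℂ} (hω : IsPrimitiveRoot ω 3) :
    ∑ x, χ x * χ (x + 1) =
      jacobiFiberCard χ 1 + jacobiFiberCard χ ω * ω + jacobiFiberCard χ (ω ^ 2) * ω ^ 2 := by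
  have hω0 : ω ≠ 0 := hω.ne_zero three_ne_zero
  have hfiber (c : ℂ) :
      ∑ x with χ x * χ (x + 1) = c, χ x * χ (x + 1) = jacobiFiberCard χ c * c := by
    rw [sum_congr rfl fun x hx ↦ (mem_filter.mp hx).2, sum_const, nsmul_eq_mul, jacobiFiberCard]
  have hmaps (x : F) : χ x * χ (x + 1) ∈ insert 0 ((range 3).image (ω ^ ·)) := by
    rw [← map_mul]
    rcases eq_or_ne (x * (x + 1)) 0 with h | h
    · simp [h]
    · exact mem_insert_of_mem (apply_mem_image_pow hχ hω h)
  rw [← sum_fiberwise_of_maps_to fun x _ ↦ hmaps x,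
    sum_insert fun h ↦ by simp [hω0] at h, sum_image hω.injOn_pow]
  simp only [hfiber, sum_range_succ, sum_range_zero, pow_zero, pow_one, mul_zero, mul_one,
    zero_add]

lemma jacobiSum_self_eq_intCast (hχ : χ ^ 3 = 1) {ω : ℂ} (hω : IsPrimitiveRoot ω 3)
    (h : cyclotomicNumber χ 1 ω = cyclotomicNumber χ 1 (ω ^ 2)) :
    jacobiSum χ χ = ((jacobiFiberCard χ 1 - jacobiFiberCard χ ω : ℤ) : ℂ) := by
  have hsum : 1 + ω + ω ^ 2 = 0 := by
    simpa [sum_range_succ] using hω.geom_sum_eq_zero (by norm_num)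
  rw [jacobiSum_self_eq_sum_add_one hχ, sum_mul_apply_add_one_eq hχ hω,
    jacobiFiberCard_eq_three_mul hχ hω,
    jacobiFiberCard_eq_three_mul hχ (hω.pow_of_coprime 2 (by norm_num)), ← h]
  push_cast
  linear_combination 3 * (cyclotomicNumber χ 1 ω : ℂ) * hsum

lemma jacobiSum_inv_inv (χ ψ : MulChar F ℂ) :
    jacobiSum χ⁻¹ ψ⁻¹ = starRingEnd ℂ (jacobiSum χ ψ) := by
  rw [← star_eq_inv, ← star_eq_inv, ← jacobiSum_ringHomComp]
  rfl

theorem cyclotomicNumber_ne_of_not_isSquare (hχ : orderOf χ = 3) {ω : ℂ}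
    (hω : IsPrimitiveRoot ω 3) (hF : ¬IsSquare (Fintype.card F)) :
    cyclotomicNumber χ 1 ω ≠ cyclotomicNumber χ 1 (ω ^ 2) := by
  intro h
  have hχ3 : χ ^ 3 = 1 := hχ ▸ pow_orderOf_eq_one χ
  have hχ1 : χ ≠ 1 := by rintro rfl; simp at hχ
  have hχχ : χ * χ ≠ 1 := by
    rw [← sq]; intro h2
    have := orderOf_dvd_of_pow_eq_one h2
    rw [hχ] at this; norm_num at this
  have hchar : ringChar ℂ ≠ ringChar F := by
    rw [ringChar.eq_zero]; exact (CharP.ringChar_ne_zero_of_finite F).symm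
  set z := (jacobiFiberCard χ 1 - jacobiFiberCard χ ω : ℤ)
  have hz : (z * z : ℂ) = Fintype.card F := by
    rw [← jacobiSum_mul_jacobiSum_inv hchar hχ1 hχ1 hχχ, jacobiSum_inv_inv,
      jacobiSum_self_eq_intCast hχ3 hω h, map_intCast]
  have hz' : z * z = Fintype.card F := by exact_mod_cast hz
  exact hF ⟨z.natAbs, by rw [← Int.natAbs_mul, hz', Int.natAbs_natCast]⟩

end MulChar

lemma ZMod.natCast_add_one_ne_zero_iff {p b : ℕ} (hb : b < p) :
    (b : ZMod p) + 1 ≠ 0 ↔ b ≠ p - 1 := by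
  rw [← Nat.cast_add_one, ne_eq, ZMod.natCast_eq_zero_iff]
  refine ⟨fun h hb' ↦ h (by rw [hb', Nat.sub_add_cancel (by omega)]), fun h hdvd ↦ h ?_⟩
  have := Nat.le_of_dvd (Nat.succ_pos b) hdvd
  omega

lemma ZMod.natCard_subtype_nat_eq_card_filter {p : ℕ} [NeZero p] (P : ZMod p → Prop)
    [DecidablePred P] :
    Nat.card {b : ℕ // 1 ≤ b ∧ b ≤ p - 1 ∧ b ≠ p - 1 ∧ P b} =
      #{x : ZMod p | x ≠ 0 ∧ x + 1 ≠ 0 ∧ P x} := by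
  have hiff {b : ℕ} (hb : b < p) :
      (1 ≤ b ∧ b ≤ p - 1 ∧ b ≠ p - 1 ∧ P b) ↔ ((b : ZMod p) ≠ 0 ∧ (b : ZMod p) + 1 ≠ 0 ∧ P b) := by
    rw [ZMod.natCast_add_one_ne_zero_iff hb, ne_eq (b : ZMod p), ZMod.natCast_eq_zero_iff,
      Nat.dvd_iff_mod_eq_zero, Nat.mod_eq_of_lt hb]
    exact ⟨fun ⟨h1, _, h3, h4⟩ ↦ ⟨by omega, h3, h4⟩,
      fun ⟨h1, h3, h4⟩ ↦ ⟨by omega, by omega, h3, h4⟩⟩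
  rw [← Fintype.card_subtype, ← Nat.card_eq_fintype_card]
  exact Nat.card_congr
    { toFun b := ⟨b.1, (hiff (by omega)).mp b.2⟩
      invFun x := ⟨x.1.val, (hiff x.1.val_lt).mpr (by rw [ZMod.natCast_zmod_val]; exact x.2)⟩
      left_inv b := Subtype.ext (ZMod.val_cast_of_lt (by omega))
      right_inv x := Subtype.ext (ZMod.natCast_zmod_val x.1) }

section Gcoset

variable {p : ℕ} {g : ZMod p} {χ : MulChar (ZMod p) ℂ}

lemma mem_Gcoset_iff (hg : ∀ x : ZMod p, x ≠ 0 → ∃ j : ℕ, x = g ^ j)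
    (hω : IsPrimitiveRoot (χ g) 3) {x : ZMod p} (hx : x ≠ 0) (k : ZMod 3) :
    x ∈ Gcoset p g k ↔ χ x = χ g ^ k.val := by
  have hexp (j : ℕ) : (j : ZMod 3) = k ↔ χ g ^ j = χ g ^ k.val := by
    conv_lhs => rw [← ZMod.natCast_zmod_val k]
    rw [ZMod.natCast_eq_natCast_iff, (hω.isOfFinOrder three_ne_zero).pow_eq_pow_iff_modEq,
      ← hω.eq_orderOf]
  constructor
  · rintro ⟨j, hj, rfl⟩
    rw [map_pow]
    exact (hexp j).mp hj
  · intro h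
    obtain ⟨j, rfl⟩ := hg x hx
    exact ⟨j, (hexp j).mpr (by rwa [map_pow] at h), rfl⟩

open Classical in
lemma transNum_one_eq_cyclotomicNumber [Fact p.Prime]
    (hg : ∀ x : ZMod p, x ≠ 0 → ∃ j : ℕ, x = g ^ j) (hω : IsPrimitiveRoot (χ g) 3) (i k : ZMod 3) :
    transNum p g 1 i k = χ.cyclotomicNumber (χ g ^ i.val) (χ g ^ k.val) := by
  have hne {y : ZMod p} {n : ℕ} (hy : χ y = χ g ^ n) : y ≠ 0 := by
    rintro rfl
    exact pow_ne_zero n (hω.ne_zero three_ne_zero) (hy ▸ χ.map_zero)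
  rw [transNum, ZMod.natCard_subtype_nat_eq_card_filter
    (fun x ↦ x ∈ Gcoset p g i ∧ x + ((1 : ℕ) : ZMod p) ∈ Gcoset p g k), MulChar.cyclotomicNumber]
  refine congrArg card (filter_congr fun x _ ↦ ?_)
  rw [Nat.cast_one]
  constructor
  · rintro ⟨hx0, hx1, hi, hk⟩
    exact ⟨(mem_Gcoset_iff hg hω hx0 i).mp hi, (mem_Gcoset_iff hg hω hx1 k).mp hk⟩
  · rintro ⟨hi, hk⟩
    exact ⟨hne hi, hne hk, (mem_Gcoset_iff hg hω (hne hi) i).mpr hi,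
      (mem_Gcoset_iff hg hω (hne hk) k).mpr hk⟩

end Gcoset

theorem stmt_8 (p : ℕ) (hp : p.Prime) (hp6 : p % 6 = 1)
    (g : ZMod p) (hg : ∀ x : ZMod p, x ≠ 0 → ∃ j : ℕ, x = g ^ j) :
    transNum p g 1 0 1 ≠ transNum p g 1 0 2 := by
  have : Fact p.Prime := ⟨hp⟩
  obtain ⟨χ, hχ⟩ := MulChar.exists_mulChar_orderOf (ZMod p)
    (by rw [ZMod.card]; omega : 3 ∣ Fintype.card (ZMod p) - 1)
    (Complex.isPrimitiveRoot_exp 3 (by norm_num))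
  have hω := MulChar.isPrimitiveRoot_apply_of_orderOf_eq_three hχ hg
  rw [transNum_one_eq_cyclotomicNumber hg hω, transNum_one_eq_cyclotomicNumber hg hω]
  show χ.cyclotomicNumber (χ g ^ 0) (χ g ^ 1) ≠ χ.cyclotomicNumber (χ g ^ 0) (χ g ^ 2)
  rw [pow_zero, pow_one]
  exact MulChar.cyclotomicNumber_ne_of_not_isSquare hχ hω
    (by rw [ZMod.card]; exact hp.not_isSquare)
end

section
/- Let s₁, s₂, s₃ ∈ ℝ satisfy s₁²s₂² - 4s₁³s₃ - 4s₂³ + 18s₁s₂s₃ - 27s₃² > 0. Then s₁² - 3s₂ > 0 and |2s₁³ - 9s₁s₂ + 27s₃| < 2(s₁² - 3s₂)^{3/2}. -/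
/-! Shifting `h = t + s₁/3` depresses the cubic to `t³ - (P/3) t - Q/27` with
`P = s₁² - 3s₂` and `Q = 2s₁³ - 9s₁s₂ + 27s₃`, whose discriminant is `(4P³ - Q²)/27`.
So a positive discriminant means `Q² < 4P³`, which forces `P > 0` and, taking square roots,
`|Q| < 2P^{3/2}`. -/

theorem cubic_discrim_eq (s₁ s₂ s₃ : ℝ) :
    27 * (s₁ ^ 2 * s₂ ^ 2 - 4 * s₁ ^ 3 * s₃ - 4 * s₂ ^ 3 + 18 * s₁ * s₂ * s₃ - 27 * s₃ ^ 2) =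
      4 * (s₁ ^ 2 - 3 * s₂) ^ 3 - (2 * s₁ ^ 3 - 9 * s₁ * s₂ + 27 * s₃) ^ 2 := by
  ring

theorem pos_of_sq_lt_four_mul_pow_three {p q : ℝ} (h : q ^ 2 < 4 * p ^ 3) : 0 < p := by
  have : 0 < p ^ 3 := by nlinarith [sq_nonneg q]
  exact (Odd.pow_pos_iff (by decide)).mp this

theorem abs_lt_two_mul_rpow_of_sq_lt {p q : ℝ} (h : q ^ 2 < 4 * p ^ 3) :
    |q| < 2 * p ^ ((3 : ℝ) / 2) := by
  have hp := pos_of_sq_lt_four_mul_pow_three h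
  have hsq : (2 * p ^ ((3 : ℝ) / 2)) ^ 2 = 4 * p ^ 3 := by
    rw [mul_pow, ← Real.rpow_natCast (p ^ ((3 : ℝ) / 2)), ← Real.rpow_mul hp.le]
    norm_num
  exact abs_lt_of_sq_lt_sq (hsq ▸ h) (by positivity)

theorem stmt_11 (s₁ s₂ s₃ : ℝ)
    (hdisc : s₁ ^ 2 * s₂ ^ 2 - 4 * s₁ ^ 3 * s₃ - 4 * s₂ ^ 3 + 18 * s₁ * s₂ * s₃
      - 27 * s₃ ^ 2 > 0) :
    s₁ ^ 2 - 3 * s₂ > 0 ∧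
    |2 * s₁ ^ 3 - 9 * s₁ * s₂ + 27 * s₃| < 2 * (s₁ ^ 2 - 3 * s₂) ^ ((3 : ℝ) / 2) := by
  have h : (2 * s₁ ^ 3 - 9 * s₁ * s₂ + 27 * s₃) ^ 2 < 4 * (s₁ ^ 2 - 3 * s₂) ^ 3 := by
    linarith [cubic_discrim_eq s₁ s₂ s₃]
  exact ⟨pos_of_sq_lt_four_mul_pow_three h, abs_lt_two_mul_rpow_of_sq_lt h⟩
end
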